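/- arXiv:1404.2031 — 2 statements merged into one kernel-verified Lean document; each statement's English description precedes it below -/
import Mathlib

section
/- Let N ≥ 2, a > 0, λ > 0, p > 2, and let ν be a finite O(N)-invariant Borel measure on ℝ^N. Suppose u : ℝ^N → ℝ is C², u ∈ L²(ℝ^N), its gradient ∇u belongs to L²(ℝ^N; ℝ^N), u is not identically zero, and for every x ∈ ℝ^N one has −a·Δu(x) − 2∫(u(x+y) − u(x)) dν(y) + λ·u(x) = u⁺(x)^{p−1}. If x₀ ∈ ℝ^N is a global maximum point of u (i.e. u(x) ≤ u(x₀) for all x), then u(x₀) ≥ λ^{1/(p−2)}. -/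
/-!
At a global maximum point `x₀` both `Δu(x₀) ≤ 0` and `∫ (u(x₀ + y) - u(x₀)) dν ≤ 0`, so the
equation gives `λ u(x₀) ≤ u⁺(x₀)^(p-1)`, which is the claim once `u(x₀) > 0`. A function in `L²`
of the whole space cannot stay below a negative constant, so `u(x₀) ≥ 0`. If `u(x₀) = 0`, then
`u ≤ 0`, the equation becomes linear and gives `Δu ≥ K u` with `K = (λ + 2 ν(ℝᴺ)) / a ≥ 0`, and
the strong maximum principle forces `u ≡ 0`. The latter is proved by Hopf's argument: at a point
`z` where `u` first vanishes, seen from a ball on which `u < 0`, compare `u` with a Gaussian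
barrier on an annulus.
-/

open MeasureTheory
open scoped RealInnerProductSpace

/-- The Laplacian of `u : ℝ^N → ℝ`, computed in the standard orthonormal basis. -/
noncomputable def laplacian {N : ℕ} (u : EuclideanSpace ℝ (Fin N) → ℝ)
    (x : EuclideanSpace ℝ (Fin N)) : ℝ :=
  ∑ i : Fin N,
    fderiv ℝ (fun y => fderiv ℝ u y (EuclideanSpace.single i 1)) x (EuclideanSpace.single i 1)

open Topology in
theorem IsLocalMax.deriv_deriv_nonpos {f : ℝ → ℝ} {a : ℝ} (h : IsLocalMax f a)
    (hc : ContinuousAt f a) : deriv (deriv f) a ≤ 0 := by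
  by_contra! hpos
  -- the second-derivative test would make `a` a local minimum too, so `f` is locally constant
  have hmin : IsLocalMin f a := isLocalMin_of_deriv_deriv_pos hpos h.deriv_eq_zero hc
  have hconst : f =ᶠ[𝓝 a] fun _ => f a := by
    filter_upwards [h, hmin] with x hmax hmin using le_antisymm hmax hmin
  simp [hconst.deriv.deriv_eq] at hpos

section LineRestriction

variable {E : Type*} [NormedAddCommGroup E] [NormedSpace ℝ E]

theorem hasDerivAt_comp_add_smul {v : E → ℝ} {x e : E} {t : ℝ}
    (hv : DifferentiableAt ℝ v (x + t • e)) :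
    HasDerivAt (fun s : ℝ => v (x + s • e)) (fderiv ℝ v (x + t • e) e) t := by
  have hline : HasDerivAt (fun s : ℝ => x + s • e) e t := by
    simpa using ((hasDerivAt_id t).smul_const e).const_add x
  exact hv.hasFDerivAt.comp_hasDerivAt t hline

theorem ContDiff.differentiable_fderiv_apply {v : E → ℝ} (hv : ContDiff ℝ 2 v) (e : E) :
    Differentiable ℝ fun y => fderiv ℝ v y e :=
  ((hv.fderiv_right (m := 1) le_rfl).clm_apply contDiff_const).differentiable one_ne_zero

theorem IsLocalMax.fderiv_fderiv_apply_nonpos {w : E → ℝ} {q : E} (h : IsLocalMax w q)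
    (hw : ContDiff ℝ 2 w) (e : E) : fderiv ℝ (fun y => fderiv ℝ w y e) q e ≤ 0 := by
  have hline : IsLocalMax (fun s : ℝ => w (q + s • e)) 0 :=
    IsLocalMax.comp_continuous (g := fun s : ℝ => q + s • e) (by simpa using h) (by fun_prop)
  have hderiv : deriv (fun s : ℝ => w (q + s • e)) = fun s => fderiv ℝ w (q + s • e) e :=
    funext fun s => (hasDerivAt_comp_add_smul (hw.differentiable (by norm_num) _)).deriv
  have hderiv2 := hasDerivAt_comp_add_smul (t := 0)
    (hw.differentiable_fderiv_apply e (q + (0 : ℝ) • e))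
  simp only [zero_smul, add_zero] at hderiv2
  rw [← hderiv2.deriv, ← hderiv]
  exact hline.deriv_deriv_nonpos (hw.continuous.comp (by fun_prop)).continuousAt

end LineRestriction

section Laplacian

variable {N : ℕ}

theorem laplacian_nonpos_of_isLocalMax {w : EuclideanSpace ℝ (Fin N) → ℝ}
    {q : EuclideanSpace ℝ (Fin N)} (h : IsLocalMax w q) (hw : ContDiff ℝ 2 w) :
    laplacian w q ≤ 0 :=
  Finset.sum_nonpos fun _ _ => h.fderiv_fderiv_apply_nonpos hw _

theorem laplacian_add_const_mul {u f : EuclideanSpace ℝ (Fin N) → ℝ}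
    (hu : ContDiff ℝ 2 u) (hf : ContDiff ℝ 2 f) (c : ℝ) (x : EuclideanSpace ℝ (Fin N)) :
    laplacian (fun y => u y + c * f y) x = laplacian u x + c * laplacian f x := by
  rw [laplacian, laplacian, laplacian, Finset.mul_sum, ← Finset.sum_add_distrib]
  refine Finset.sum_congr rfl fun i _ => ?_
  set e : EuclideanSpace ℝ (Fin N) := EuclideanSpace.single i 1
  have hdu := hu.differentiable (by norm_num)
  have hdf := hf.differentiable (by norm_num)
  have hfirst : (fun y => fderiv ℝ (fun z => u z + c * f z) y e)
      = fun y => fderiv ℝ u y e + c * fderiv ℝ f y e := by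
    funext y
    rw [fderiv_fun_add (hdu y) ((hdf y).const_mul c), fderiv_const_mul (hdf y)]
    simp
  have hgu := hu.differentiable_fderiv_apply e x
  have hgf := hf.differentiable_fderiv_apply e x
  rw [hfirst, fderiv_fun_add hgu (hgf.const_mul c), fderiv_const_mul hgf]
  simp

end Laplacian

section Gaussian

variable {E : Type*} [NormedAddCommGroup E] (y : E) (α : ℝ)

noncomputable def gaussianBump (x : E) : ℝ := Real.exp (-α * ‖x - y‖ ^ 2)

theorem gaussianBump_pos (x : E) : 0 < gaussianBump y α x := Real.exp_pos _

theorem gaussianBump_lt_one (hα : 0 < α) {x : E} (hx : x ≠ y) :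
    gaussianBump y α x < 1 :=
  Real.exp_lt_one_iff.2 <| by
    rw [neg_mul, neg_lt_zero]
    exact mul_pos hα (pow_pos (norm_pos_iff.2 (sub_ne_zero.2 hx)) 2)

variable [InnerProductSpace ℝ E]

theorem contDiff_gaussianBump : ContDiff ℝ 2 (gaussianBump y α) :=
  Real.contDiff_exp.comp (contDiff_const.mul ((contDiff_id.sub contDiff_const).norm_sq ℝ))

theorem hasFDerivAt_gaussianBump (x : E) :
    HasFDerivAt (gaussianBump y α) ((-2 * α * gaussianBump y α x) • innerSL ℝ (x - y)) x := by
  have hsq : HasFDerivAt (fun x : E => ‖x - y‖ ^ 2) (2 • innerSL ℝ (x - y)) x := by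
    simpa using ((hasFDerivAt_id x).sub_const y).norm_sq
  refine ((Real.hasDerivAt_exp _).comp_hasFDerivAt x (hsq.const_mul (-α))).congr_fderiv ?_
  ext v
  simp [gaussianBump, innerSL_apply_apply]
  ring

theorem fderiv_gaussianBump_apply (x e : E) :
    fderiv ℝ (gaussianBump y α) x e = -2 * α * ⟪x - y, e⟫ * gaussianBump y α x := by
  rw [(hasFDerivAt_gaussianBump y α x).fderiv]
  simp only [smul_apply, innerSL_apply_apply, smul_eq_mul]
  ring

theorem fderiv_fderiv_gaussianBump_apply (x e : E) :
    fderiv ℝ (fun x' => fderiv ℝ (gaussianBump y α) x' e) x e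
      = (-2 * α * ‖e‖ ^ 2 + 4 * α ^ 2 * ⟪x - y, e⟫ ^ 2) * gaussianBump y α x := by
  simp_rw [fderiv_gaussianBump_apply]
  have hinner : HasFDerivAt (fun x' : E => ⟪x' - y, e⟫) (innerSL ℝ e) x := by
    simpa [Function.comp_def, real_inner_comm] using
      (innerSL ℝ e).hasFDerivAt.comp x ((hasFDerivAt_id x).sub_const y)
  rw [((hinner.const_mul (-2 * α)).fun_mul (hasFDerivAt_gaussianBump y α x)).fderiv]
  simp only [add_apply, smul_apply, innerSL_apply_apply,
    smul_eq_mul, real_inner_self_eq_norm_sq]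
  ring

theorem fderiv_gaussianBump_apply_sub (x : E) (c : ℝ) :
    fderiv ℝ (gaussianBump y α) x (c • (y - x))
      = 2 * c * α * ‖x - y‖ ^ 2 * gaussianBump y α x := by
  rw [fderiv_gaussianBump_apply, inner_smul_right, ← neg_sub x y, inner_neg_right,
    real_inner_self_eq_norm_sq]
  ring

end Gaussian

section GaussianLaplacian

variable {N : ℕ} (y : EuclideanSpace ℝ (Fin N)) (α : ℝ)

theorem laplacian_gaussianBump (x : EuclideanSpace ℝ (Fin N)) :
    laplacian (gaussianBump y α) x
      = (4 * α ^ 2 * ‖x - y‖ ^ 2 - 2 * α * N) * gaussianBump y α x := by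
  simp only [laplacian, fderiv_fderiv_gaussianBump_apply, EuclideanSpace.inner_single_right,
    PiLp.norm_single, norm_one, ← Finset.sum_mul]
  congr 1
  rw [EuclideanSpace.norm_sq_eq, Finset.sum_add_distrib, Finset.mul_sum]
  simp [Real.norm_eq_abs, sq_abs]
  ring

theorem exists_gaussianBump_laplacian_ge {r : ℝ} (hr : 0 < r) {c : ℝ} (hc : 0 ≤ c) :
    ∃ α > 0, ∀ x, r ≤ ‖x - y‖ → c * gaussianBump y α x ≤ laplacian (gaussianBump y α) x := by
  set α : ℝ := 1 + (2 * N + c) / r ^ 2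
  have hα : 1 ≤ α := le_add_of_nonneg_right (by positivity)
  have hαr : 2 * N + c ≤ α * r ^ 2 := by
    simp only [α, add_mul, div_mul_cancel₀ _ (pow_pos hr 2).ne']
    nlinarith
  refine ⟨α, by linarith, fun x hx => ?_⟩
  rw [laplacian_gaussianBump]
  refine mul_le_mul_of_nonneg_right ?_ (gaussianBump_pos y α x).le
  have hsq : r ^ 2 ≤ ‖x - y‖ ^ 2 := pow_le_pow_left₀ hr.le hx 2
  nlinarith [mul_le_mul_of_nonneg_left hsq (sq_nonneg α),
    mul_le_mul_of_nonneg_left hαr (by linarith : (0 : ℝ) ≤ α)]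

end GaussianLaplacian

section Annulus

open Metric Topology

theorem closedBall_diff_ball_mem_nhds {X : Type*} [PseudoMetricSpace X] {x y : X} {r : ℝ}
    (h₁ : r / 2 < dist x y) (h₂ : dist x y < r) : closedBall y r \ ball y (r / 2) ∈ 𝓝 x :=
  Filter.mem_of_superset
    ((isOpen_Ioo.preimage (continuous_id.dist continuous_const)).mem_nhds ⟨h₁, h₂⟩)
    fun _ hx => ⟨le_of_lt hx.2, not_lt.2 (le_of_lt hx.1)⟩

variable {E : Type*} [NormedAddCommGroup E] [NormedSpace ℝ E]

theorem segment_subset_closedBall_diff_ball {x y : E} {r : ℝ} (hx : dist x y = r) :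
    segment ℝ x (x + (1 / 2 : ℝ) • (y - x)) ⊆ closedBall y r \ ball y (r / 2) := by
  rw [segment_eq_image']
  rintro _ ⟨t, ⟨ht₀, ht₁⟩, rfl⟩
  have hdist : dist (x + t • (x + (1 / 2 : ℝ) • (y - x) - x)) y = (1 - t / 2) * r := by
    rw [dist_eq_norm, show x + t • (x + (1 / 2 : ℝ) • (y - x) - x) - y = (1 - t / 2) • (x - y) by
      module, norm_smul, Real.norm_of_nonneg (by linarith : (0 : ℝ) ≤ 1 - t / 2),
      ← dist_eq_norm, hx]
  have hr : 0 ≤ r := hx ▸ dist_nonneg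
  simp only [Set.mem_sdiff, mem_closedBall, mem_ball, not_lt, hdist]
  constructor <;> nlinarith

theorem IsMaxOn.fderiv_apply_sub_nonpos_of_dist_eq {w : E → ℝ} {y q : E} {r : ℝ}
    (hmax : IsMaxOn w (closedBall y r \ ball y (r / 2)) q) (hw : DifferentiableAt ℝ w q)
    (hq : dist q y = r) : fderiv ℝ w q ((1 / 2 : ℝ) • (y - q)) ≤ 0 :=
  hmax.localize.hasFDerivWithinAt_nonpos hw.hasFDerivAt.hasFDerivWithinAt
    (mem_posTangentConeAt_of_segment_subset (segment_subset_closedBall_diff_ball hq))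

end Annulus

section MaximumPrinciple

open Metric

variable {N : ℕ} {u : EuclideanSpace ℝ (Fin N) → ℝ} {K : ℝ}

theorem hopf_lemma (hu : ContDiff ℝ 2 u) (hK : 0 ≤ K) (hlap : ∀ x, K * u x ≤ laplacian u x)
    (hle : ∀ x, u x ≤ 0) {y₀ z : EuclideanSpace ℝ (Fin N)} {r : ℝ} (hr : 0 < r)
    (hneg : ∀ x, dist x y₀ < r → u x < 0) (hz : dist z y₀ = r) : u z < 0 := by
  refine (hle z).lt_of_ne fun hz₀ => ?_
  obtain ⟨α, hα, hbarrier⟩ :=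
    exists_gaussianBump_laplacian_ge y₀ (half_pos hr) (by linarith : 0 ≤ K + 1)
  obtain ⟨δ, hδ, hδu⟩ : ∃ δ, 0 < δ ∧ ∀ x ∈ sphere y₀ (r / 2), δ ≤ -u x :=
    (isCompact_sphere y₀ (r / 2)).exists_forall_le' hu.continuous.neg.continuousOn
      fun x hx => neg_pos.2 (hneg x (by rw [mem_sphere.1 hx]; linarith))
  have hg := contDiff_gaussianBump y₀ α
  set g := gaussianBump y₀ α
  set w := fun x => u x + δ * g x with hw_def
  have hw : ContDiff ℝ 2 w := hu.add (contDiff_const.mul hg)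
  have hzA : z ∈ closedBall y₀ r \ ball y₀ (r / 2) :=
    ⟨hz.le, by rw [mem_ball, hz, not_lt]; linarith⟩
  obtain ⟨q, ⟨hq_le, hq_ge⟩, hqmax⟩ := ((isCompact_closedBall y₀ r).diff isOpen_ball).exists_isMaxOn
    ⟨z, hzA⟩ hw.continuous.continuousOn
  have hwq : 0 < w q :=
    (by simpa [w, hz₀] using mul_pos hδ (gaussianBump_pos y₀ α z) : 0 < w z).trans_le (hqmax hzA)
  have hq_in : r / 2 ≤ dist q y₀ := not_lt.1 hq_ge
  -- `q` can lie neither on the inner sphere, where `w < 0`, nor on the outer one, where `u q = 0`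
  -- forces `∇u(q) = 0` while `∇g(q)` points into the annulus, nor inside, where `Δw > 0`.
  rcases hq_in.eq_or_lt with hq_inner | hq_gt
  · have hgq : g q < 1 := gaussianBump_lt_one y₀ α hα (dist_pos.1 (by linarith))
    nlinarith [hδu q (mem_sphere.2 hq_inner.symm)]
  rcases (mem_closedBall.1 hq_le).eq_or_lt with hq_outer | hq_lt
  · have huq : u q = 0 := by
      have hwz : w z ≤ w q := hqmax hzA
      simp only [w, hz₀, g, gaussianBump, ← dist_eq_norm, hz, hq_outer] at hwz
      linarith [hle q]
    have hfu : fderiv ℝ u q = 0 :=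
      IsLocalMax.fderiv_eq_zero (Filter.Eventually.of_forall fun x => huq ▸ hle x)
    have hdg := hg.differentiable (by norm_num) q
    have hderiv :=
      hqmax.fderiv_apply_sub_nonpos_of_dist_eq (hw.differentiable (by norm_num) q) hq_outer
    rw [fderiv_fun_add (hu.differentiable (by norm_num) q) (hdg.const_mul δ),
      fderiv_const_mul hdg, hfu] at hderiv
    simp only [zero_add, smul_apply, smul_eq_mul, g, fderiv_gaussianBump_apply_sub] at hderiv
    have hdist : 0 < ‖q - y₀‖ := by rw [← dist_eq_norm]; linarith
    nlinarith [mul_pos (mul_pos (mul_pos hδ hα) (pow_pos hdist 2)) (gaussianBump_pos y₀ α q)]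
  · have hlapw := laplacian_nonpos_of_isLocalMax
      (hqmax.isLocalMax (closedBall_diff_ball_mem_nhds hq_gt hq_lt)) hw
    rw [hw_def, laplacian_add_const_mul hu hg] at hlapw
    have hgq := hbarrier q (by rwa [← dist_eq_norm])
    nlinarith [hlap q, gaussianBump_pos y₀ α q, mul_le_mul_of_nonneg_left hgq hδ.le,
      mul_nonneg hK hwq.le]

theorem eq_zero_of_laplacian_ge_of_nonpos (hu : ContDiff ℝ 2 u) (hK : 0 ≤ K)
    (hlap : ∀ x, K * u x ≤ laplacian u x) (hle : ∀ x, u x ≤ 0) {x₀ : EuclideanSpace ℝ (Fin N)}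
    (hx₀ : u x₀ = 0) : u = 0 := by
  by_contra hne
  obtain ⟨y₀, hy₀⟩ := Function.ne_iff.1 hne
  set Z := {x | u x = 0}
  have hZ : IsClosed Z := isClosed_eq hu.continuous continuous_const
  have hr : 0 < infDist y₀ Z := (hZ.notMem_iff_infDist_pos ⟨x₀, hx₀⟩).1 hy₀
  obtain ⟨z, hzZ, hz⟩ := hZ.exists_infDist_eq_dist ⟨x₀, hx₀⟩ y₀
  have hneg : ∀ x, dist x y₀ < infDist y₀ Z → u x < 0 := fun x hx =>
    (hle x).lt_of_ne fun hx0 =>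
      (infDist_le_dist_of_mem (x := y₀) (show x ∈ Z from hx0)).not_gt (by rwa [dist_comm])
  exact (hopf_lemma hu hK hlap hle hr hneg (by rw [dist_comm, hz])).ne hzZ

end MaximumPrinciple

theorem MeasureTheory.MemLp.nonneg_of_forall_le {α : Type*} [MeasurableSpace α] {μ : Measure α}
    {f : α → ℝ} {p : ENNReal} (hf : MemLp f p μ) (hp₀ : p ≠ 0) (hp : p ≠ ⊤)
    (hμ : μ Set.univ = ⊤) {M : ℝ} (hM : ∀ x, f x ≤ M) : 0 ≤ M := by
  by_contra! hM₀
  have hfar : {x | (-M).toNNReal ≤ ‖f x‖₊} = Set.univ := by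
    refine Set.eq_univ_of_forall fun x => ?_
    rw [Set.mem_ofPred_eq, Real.toNNReal_le_iff_le_coe, coe_nnnorm, Real.norm_eq_abs]
    exact (neg_le_neg (hM x)).trans (neg_le_abs _)
  have := hf.meas_ge_lt_top hp₀ hp (ε := (-M).toNNReal) (by simpa using hM₀)
  rw [hfar, hμ] at this
  exact lt_irrefl _ this

theorem integral_sub_le_neg_mul_of_nonpos {α : Type*} [MeasurableSpace α] {ν : Measure α}
    [IsFiniteMeasure ν] {f : α → ℝ} {c : ℝ} (hf : ∀ y, f y ≤ 0) (hc : c ≤ 0) :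
    ∫ y, (f y - c) ∂ν ≤ -(ν.real Set.univ * c) := by
  by_cases hint : Integrable (fun y => f y - c) ν
  · have hfint : Integrable f ν :=
      integrable_add_const_iff.1 (by simpa only [sub_eq_add_neg] using hint)
    rw [integral_sub hfint (integrable_const c), integral_const, smul_eq_mul]
    linarith [integral_nonpos (μ := ν) hf]
  · rw [integral_undef hint]
    nlinarith [measureReal_nonneg (μ := ν) (s := Set.univ)]

theorem rpow_one_div_le_of_mul_le_rpow {lam x p : ℝ} (hlam : 0 ≤ lam) (hx : 0 < x) (hp : 2 < p)
    (h : lam * x ≤ x ^ (p - 1)) : lam ^ (1 / (p - 2)) ≤ x := by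
  rw [show p - 1 = (p - 2) + 1 by ring, Real.rpow_add_one hx.ne'] at h
  rw [one_div, Real.rpow_inv_le_iff_of_pos hlam hx.le (by linarith)]
  exact le_of_mul_le_mul_right h hx

theorem mul_le_laplacian_of_nonpos {N : ℕ} {ν : Measure (EuclideanSpace ℝ (Fin N))}
    [IsFiniteMeasure ν] {u : EuclideanSpace ℝ (Fin N) → ℝ} {a lam p : ℝ} (ha : 0 < a)
    (hp : p ≠ 1)
    (heq : ∀ x, -a * laplacian u x - 2 * (∫ y, (u (x + y) - u x) ∂ν) + lam * u x
      = max (u x) 0 ^ (p - 1))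
    (hle : ∀ x, u x ≤ 0) (x : EuclideanSpace ℝ (Fin N)) :
    (lam + 2 * ν.real Set.univ) / a * u x ≤ laplacian u x := by
  have hjump := integral_sub_le_neg_mul_of_nonpos (ν := ν) (fun y => hle (x + y)) (hle x)
  have h := heq x
  rw [max_eq_right (hle x), Real.zero_rpow (sub_ne_zero.2 hp)] at h
  rw [div_mul_eq_mul_div, div_le_iff₀ ha]
  linarith

theorem value_at_maximum_point_general
    (N : ℕ) (hN : 2 ≤ N)
    (a : ℝ) (ha : 0 < a) (lam : ℝ) (hlam : 0 < lam) (p : ℝ) (hp : 2 < p)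
    (ν : Measure (EuclideanSpace ℝ (Fin N))) [IsFiniteMeasure ν]
    (u : EuclideanSpace ℝ (Fin N) → ℝ)
    (hu : ContDiff ℝ 2 u)
    (huL2 : MemLp u 2 (volume : Measure (EuclideanSpace ℝ (Fin N))))
    (hne : u ≠ 0)
    (heq : ∀ x, -a * laplacian u x - 2 * (∫ y, (u (x + y) - u x) ∂ν) + lam * u x
      = max (u x) 0 ^ (p - 1))
    (x₀ : EuclideanSpace ℝ (Fin N)) (hmax : ∀ x, u x ≤ u x₀) :
    lam ^ (1 / (p - 2)) ≤ u x₀ := by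
  have : Nonempty (Fin N) := ⟨⟨0, by omega⟩⟩
  have hx₀ : 0 < u x₀ := by
    refine (huL2.nonneg_of_forall_le two_ne_zero ENNReal.ofNat_ne_top
      (measure_univ_of_isAddLeftInvariant _) hmax).lt_of_ne fun h => hne ?_
    have hle : ∀ x, u x ≤ 0 := h ▸ hmax
    exact eq_zero_of_laplacian_ge_of_nonpos hu (by positivity)
      (mul_le_laplacian_of_nonpos ha (by linarith) heq hle) hle h.symm
  have hlap₀ : laplacian u x₀ ≤ 0 :=
    laplacian_nonpos_of_isLocalMax (Filter.Eventually.of_forall hmax) hu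
  have hjump₀ : ∫ y, (u (x₀ + y) - u x₀) ∂ν ≤ 0 :=
    integral_nonpos fun y => sub_nonpos.2 (hmax _)
  refine rpow_one_div_le_of_mul_le_rpow hlam.le hx₀ hp ?_
  have h := heq x₀
  rw [max_eq_left hx₀.le] at h
  nlinarith

theorem value_at_maximum_point
    (N : ℕ) (hN : 2 ≤ N)
    (a : ℝ) (ha : 0 < a) (lam : ℝ) (hlam : 0 < lam) (p : ℝ) (hp : 2 < p)
    (ν : Measure (EuclideanSpace ℝ (Fin N))) [IsFiniteMeasure ν]
    (hinv : ∀ (g : EuclideanSpace ℝ (Fin N) ≃ₗᵢ[ℝ] EuclideanSpace ℝ (Fin N))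
      (B : Set (EuclideanSpace ℝ (Fin N))), MeasurableSet B → ν (g ⁻¹' B) = ν B)
    (u : EuclideanSpace ℝ (Fin N) → ℝ)
    (hu : ContDiff ℝ 2 u)
    (huL2 : MemLp u 2 (volume : Measure (EuclideanSpace ℝ (Fin N))))
    (hgrad : MemLp (fun x => gradient u x) 2 (volume : Measure (EuclideanSpace ℝ (Fin N))))
    (hne : u ≠ 0)
    (heq : ∀ x, -a * laplacian u x - 2 * (∫ y, (u (x + y) - u x) ∂ν) + lam * u x
      = max (u x) 0 ^ (p - 1))
    (x₀ : EuclideanSpace ℝ (Fin N)) (hmax : ∀ x, u x ≤ u x₀) :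
    lam ^ (1 / (p - 2)) ≤ u x₀ :=
  value_at_maximum_point_general N hN a ha lam hlam p hp ν u hu huL2 hne heq x₀ hmax
end

section
/- Let N ≥ 1, a > 0, λ > 0, p > 2, and let ν be a finite Borel measure on ℝ^N. Let w : ℝ^N → ℝ be the Gaussian w(x) = exp(−‖x‖²), define Q(w) := a·∫‖∇w(x)‖² dx + ∫∫(w(x+y) − w(x))² dν(y) dx + λ·∫w(x)² dx and, for t ≥ 0, E(t·w) := (t²/2)·Q(w) − (t^p/p)·∫ w(x)^p dx. Then Q(w) and ∫w(x)^p dx are finite and positive, and for every r > 0 there exists t > 0 such that t·Q(w)^{1/2} > r and E(t·w) < 0. -/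
/-!
Every integral reduces to a Gaussian integral `∫ exp (-b‖x‖²) = (π / b) ^ (N / 2) > 0`:
`w²` and `w ^ p` are Gaussians, `‖∇w‖² = 4‖x‖² w² ≤ 4 exp (-‖x‖²)`, and the nonlocal integrand is
bounded by `2 w(x + y)² + 2 w(x)²`, which is integrable for `volume × ν` by translation invariance
of Lebesgue measure and finiteness of `ν`. Since `p > 2`, along the ray the term `t ^ p` eventually
dominates `t²`, so the energy is negative for all large `t`.
-/

open MeasureTheory Filter

lemma mul_exp_neg_two_mul_le_exp_neg (s : ℝ) : s * Real.exp (-2 * s) ≤ Real.exp (-s) := by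
  have h : Real.exp (-s) = Real.exp s * Real.exp (-2 * s) := by
    rw [← Real.exp_add]; ring_nf
  rw [h]
  gcongr
  linarith [Real.add_one_le_exp s]

section Gaussian

variable {V : Type*} [NormedAddCommGroup V]

lemma exp_neg_norm_sq_rpow (x : V) (b : ℝ) :
    Real.exp (-‖x‖ ^ 2) ^ b = Real.exp (-b * ‖x‖ ^ 2) := by
  rw [← Real.exp_mul]
  ring_nf

lemma exp_neg_norm_sq_sq (x : V) :
    Real.exp (-‖x‖ ^ 2) ^ 2 = Real.exp (-2 * ‖x‖ ^ 2) := by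
  rw [← Real.rpow_natCast, exp_neg_norm_sq_rpow]
  norm_num

variable [InnerProductSpace ℝ V]

lemma gradient_exp_neg_norm_sq [CompleteSpace V] (x : V) :
    gradient (fun x : V => Real.exp (-‖x‖ ^ 2)) x = (-2 * Real.exp (-‖x‖ ^ 2)) • x := by
  have h : HasFDerivAt (fun x : V => Real.exp (-‖x‖ ^ 2))
      (Real.exp (-‖x‖ ^ 2) • -((2 : ℕ) • innerSL ℝ x)) x :=
    (Real.hasDerivAt_exp _).comp_hasFDerivAt x (hasFDerivAt_id x).norm_sq.neg
  refine (hasGradientAt_iff_hasFDerivAt.2 (h.congr_fderiv ?_)).gradient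
  ext y
  simp [two_smul]
  ring

variable [FiniteDimensional ℝ V] [MeasurableSpace V] [BorelSpace V]

lemma integral_exp_neg_mul_norm_sq_pos {b : ℝ} (hb : 0 < b) :
    0 < ∫ x : V, Real.exp (-b * ‖x‖ ^ 2) := by
  rw [GaussianFourier.integral_rexp_neg_mul_sq_norm hb]
  positivity

lemma integrable_exp_neg_mul_norm_sq {b : ℝ} (hb : 0 < b) :
    Integrable (fun x : V => Real.exp (-b * ‖x‖ ^ 2)) :=
  Integrable.of_integral_ne_zero (integral_exp_neg_mul_norm_sq_pos hb).ne'

lemma integrable_norm_gradient_exp_neg_norm_sq_sq :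
    Integrable (fun x : V => ‖gradient (fun x : V => Real.exp (-‖x‖ ^ 2)) x‖ ^ 2) := by
  have hgrad : ∀ x : V, ‖gradient (fun x : V => Real.exp (-‖x‖ ^ 2)) x‖ ^ 2
      = 4 * (‖x‖ ^ 2 * Real.exp (-2 * ‖x‖ ^ 2)) := fun x => by
    rw [gradient_exp_neg_norm_sq, norm_smul, mul_pow, Real.norm_eq_abs, sq_abs, mul_pow,
      exp_neg_norm_sq_sq]
    ring
  simp_rw [hgrad]
  refine Integrable.const_mul ?_ 4
  refine (integrable_exp_neg_mul_norm_sq one_pos).mono' (by fun_prop) (.of_forall fun x => ?_)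
  rw [Real.norm_of_nonneg (by positivity), neg_one_mul]
  exact mul_exp_neg_two_mul_le_exp_neg _

end Gaussian

section Translation

variable {G : Type*} [AddGroup G] [MeasurableSpace G] [MeasurableAdd₂ G]
  {μ : Measure G} [SFinite μ] [μ.IsAddRightInvariant]

lemma integrable_integral_sq_sub_translate (ν : Measure G) [IsFiniteMeasure ν] {f : G → ℝ}
    (hf : Measurable f) (hf2 : Integrable (fun x => f x ^ 2) μ) :
    Integrable (fun x => ∫ y, (f (x + y) - f x) ^ 2 ∂ν) μ := by
  have hfst : Integrable (fun z : G × G => f z.1 ^ 2) (μ.prod ν) := hf2.comp_fst ν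
  have hadd : Integrable (fun z : G × G => f (z.1 + z.2) ^ 2) (μ.prod ν) :=
    (measurePreserving_add_prod μ ν).integrable_comp_of_integrable hfst
  refine Integrable.integral_prod_left (f := fun z : G × G => (f (z.1 + z.2) - f z.1) ^ 2) ?_
  refine ((hadd.const_mul 2).add (hfst.const_mul 2)).mono' (by fun_prop)
    (.of_forall fun z => ?_)
  rw [Real.norm_of_nonneg (sq_nonneg _), Pi.add_apply]
  nlinarith [sq_nonneg (f (z.1 + z.2) + f z.1)]

end Translation

lemma exists_mul_sqrt_gt_and_energy_neg {Q I p : ℝ} (hQ : 0 < Q) (hI : 0 < I) (hp : 2 < p)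
    (r : ℝ) :
    ∃ t > (0 : ℝ), t * Real.sqrt Q > r ∧ (t ^ 2 / 2) * Q - (t ^ p / p) * I < 0 := by
  have hfar : ∀ᶠ t in atTop, r < t * Real.sqrt Q :=
    (tendsto_id.atTop_mul_const (Real.sqrt_pos.2 hQ)).eventually_gt_atTop r
  have hdom : ∀ᶠ t in atTop, p * Q / (2 * I) < t ^ (p - 2) :=
    (tendsto_rpow_atTop (by linarith)).eventually_gt_atTop _
  obtain ⟨t, ht, hfar, hdom⟩ := ((eventually_gt_atTop 0).and (hfar.and hdom)).exists
  refine ⟨t, ht, hfar, ?_⟩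
  have hsplit : t ^ p = t ^ 2 * t ^ (p - 2) := by
    rw [← Real.rpow_natCast, ← Real.rpow_add ht]
    norm_num
  rw [div_lt_iff₀ (by positivity)] at hdom
  rw [hsplit, sub_neg, div_mul_eq_mul_div, div_mul_eq_mul_div, div_lt_div_iff₀ two_pos
    (by linarith)]
  nlinarith [pow_pos ht 2]

theorem mountain_pass_gaussian_ray_general
    (N : ℕ) (a lam p : ℝ)
    (ha : 0 < a) (hlam : 0 < lam) (hp : 2 < p)
    (ν : Measure (EuclideanSpace ℝ (Fin N))) [IsFiniteMeasure ν]
    (w : EuclideanSpace ℝ (Fin N) → ℝ)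
    (hw : ∀ x, w x = Real.exp (-‖x‖ ^ 2))
    (Q : ℝ)
    (hQ : Q = a * (∫ x, ‖gradient w x‖ ^ 2)
        + (∫ x, ∫ y, (w (x + y) - w x) ^ 2 ∂ν)
        + lam * ∫ x, w x ^ 2) :
    Integrable (fun x => ‖gradient w x‖ ^ 2)
      (volume : Measure (EuclideanSpace ℝ (Fin N))) ∧
    Integrable (fun x => ∫ y, (w (x + y) - w x) ^ 2 ∂ν)
      (volume : Measure (EuclideanSpace ℝ (Fin N))) ∧
    Integrable (fun x => w x ^ 2) (volume : Measure (EuclideanSpace ℝ (Fin N))) ∧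
    Integrable (fun x => w x ^ p) (volume : Measure (EuclideanSpace ℝ (Fin N))) ∧
    0 < Q ∧
    0 < ∫ x, w x ^ p ∧
    ∀ r > (0 : ℝ), ∃ t > (0 : ℝ),
      t * Real.sqrt Q > r ∧
      (t ^ 2 / 2) * Q - (t ^ p / p) * (∫ x, w x ^ p) < 0 := by
  obtain rfl : w = fun x => Real.exp (-‖x‖ ^ 2) := funext hw
  simp only [exp_neg_norm_sq_sq, exp_neg_norm_sq_rpow] at hQ ⊢
  have hp0 : 0 < p := by linarith
  have hsq_pos := integral_exp_neg_mul_norm_sq_pos (V := EuclideanSpace ℝ (Fin N)) two_pos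
  have hpow_pos := integral_exp_neg_mul_norm_sq_pos (V := EuclideanSpace ℝ (Fin N)) hp0
  have hnonlocal := integrable_integral_sq_sub_translate (μ := volume) ν
    (by fun_prop : Measurable fun x : EuclideanSpace ℝ (Fin N) => Real.exp (-‖x‖ ^ 2))
    (by simpa only [exp_neg_norm_sq_sq] using integrable_exp_neg_mul_norm_sq two_pos)
  have hQ_pos : 0 < Q := by
    rw [hQ]
    positivity
  exact ⟨integrable_norm_gradient_exp_neg_norm_sq_sq, hnonlocal,
    integrable_exp_neg_mul_norm_sq two_pos, integrable_exp_neg_mul_norm_sq hp0, hQ_pos, hpow_pos,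
    fun r _ => exists_mul_sqrt_gt_and_energy_neg hQ_pos hpow_pos hp r⟩

theorem mountain_pass_gaussian_ray
    (N : ℕ) (hN : 1 ≤ N) (a lam p : ℝ)
    (ha : 0 < a) (hlam : 0 < lam) (hp : 2 < p)
    (ν : Measure (EuclideanSpace ℝ (Fin N))) [IsFiniteMeasure ν]
    (w : EuclideanSpace ℝ (Fin N) → ℝ)
    (hw : ∀ x, w x = Real.exp (-‖x‖ ^ 2))
    (Q : ℝ)
    (hQ : Q = a * (∫ x, ‖gradient w x‖ ^ 2)
        + (∫ x, ∫ y, (w (x + y) - w x) ^ 2 ∂ν)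
        + lam * ∫ x, w x ^ 2) :
    Integrable (fun x => ‖gradient w x‖ ^ 2)
      (volume : Measure (EuclideanSpace ℝ (Fin N))) ∧
    Integrable (fun x => ∫ y, (w (x + y) - w x) ^ 2 ∂ν)
      (volume : Measure (EuclideanSpace ℝ (Fin N))) ∧
    Integrable (fun x => w x ^ 2) (volume : Measure (EuclideanSpace ℝ (Fin N))) ∧
    Integrable (fun x => w x ^ p) (volume : Measure (EuclideanSpace ℝ (Fin N))) ∧
    0 < Q ∧
    0 < ∫ x, w x ^ p ∧
    ∀ r > (0 : ℝ), ∃ t > (0 : ℝ),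
      t * Real.sqrt Q > r ∧
      (t ^ 2 / 2) * Q - (t ^ p / p) * (∫ x, w x ^ p) < 0 :=
  mountain_pass_gaussian_ray_general N a lam p ha hlam hp ν w hw Q hQ
end
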